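/- If a graph G contains two vertices u, v joined by three pairwise edge-disjoint paths, then etw(G) ≥ 3. -/

import Mathlib

open Classical

/-- A finite loopless multigraph: a finite vertex type, a finite edge type, and an
endpoint function assigning to every edge an unordered pair of distinct vertices. -/
structure FinMGraph where
  V : Type
  E : Type
  [fV : Fintype V]
  [fE : Fintype E]
  [dV : DecidableEq V]
  ends : E → Sym2 V
  loopless : ∀ e, ¬ (ends e).IsDiag

attribute [instance] FinMGraph.fV FinMGraph.fE FinMGraph.dV

namespace FinMGraph

variable (G : FinMGraph)

/-- One-step adjacency inside the vertex set `S` (i.e. in the induced subgraph `G[S]`). -/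
def stepIn (S : Set G.V) (a b : G.V) : Prop :=
  a ∈ S ∧ b ∈ S ∧ ∃ e : G.E, G.ends e = s(a, b)

/-- The vertex set of the connected component of `v` in the induced subgraph `G[S]`. -/
def comp (S : Set G.V) (v : G.V) : Set G.V :=
  {w | Relation.ReflTransGen (G.stepIn S) v w}

/-- The number of edges (counted with multiplicity) with exactly one endpoint in `X`. -/
noncomputable def cut (X : Set G.V) : ℕ :=
  Nat.card {e : G.E // ∃ a b, G.ends e = s(a, b) ∧ a ∈ X ∧ b ∉ X}

/-- For a layout `L` (a linear ordering of the vertices) the set `S_i` of vertices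
occurring at position `i` or later. -/
def tail (L : Fin (Fintype.card G.V) ≃ G.V) (i : Fin (Fintype.card G.V)) : Set G.V :=
  {v | i ≤ L.symm v}

/-- The cost `δ^ec(i) = |E_G(C_G(S_i, x_i))|` of position `i` in the layout `L`. -/
noncomputable def cost (L : Fin (Fintype.card G.V) ≃ G.V) (i : Fin (Fintype.card G.V)) : ℕ :=
  G.cut (G.comp (G.tail L i) (L i))

/-- The edge-treewidth of `G`: the minimum over all layouts of the maximum cost. -/
noncomputable def etw : ℕ :=
  sInf {k | ∃ L : Fin (Fintype.card G.V) ≃ G.V, ∀ i, G.cost L i ≤ k}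

end FinMGraph

namespace FinMGraph

variable (G : FinMGraph)

/-- `G` is a forest: every edge is a bridge, i.e. after removing an edge its two
endpoints are no longer connected. -/
def IsForest : Prop :=
  ∀ (e : G.E) (a b : G.V), G.ends e = s(a, b) →
    ¬ Relation.ReflTransGen (fun x y => ∃ f : G.E, f ≠ e ∧ G.ends f = s(x, y)) a b

/-- A cycle of length `k` in `G`, given by an injective cyclic sequence of vertices and an
injective sequence of distinct edges joining consecutive vertices. -/
def IsCycleOn (k : ℕ) (v : ZMod k → G.V) (f : ZMod k → G.E) : Prop :=
  2 ≤ k ∧ Function.Injective v ∧ Function.Injective f ∧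
    ∀ i : ZMod k, G.ends (f i) = s(v i, v (i + 1))

/-- `G` is a cactus: every edge belongs to at most one cycle, i.e. any two cycles
sharing an edge have the same edge set. -/
def IsCactus : Prop :=
  ∀ (k₁ : ℕ) (v₁ : ZMod k₁ → G.V) (f₁ : ZMod k₁ → G.E)
    (k₂ : ℕ) (v₂ : ZMod k₂ → G.V) (f₂ : ZMod k₂ → G.E),
    G.IsCycleOn k₁ v₁ f₁ → G.IsCycleOn k₂ v₂ f₂ →
    (∃ e, e ∈ Set.range f₁ ∧ e ∈ Set.range f₂) → Set.range f₁ = Set.range f₂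

/-- A walk from `a` to `b` using the listed edges, in order. -/
inductive Walk : G.V → G.V → List G.E → Prop
  | nil (v : G.V) : Walk v v []
  | cons {a b c : G.V} {e : G.E} {es : List G.E} :
      G.ends e = s(a, b) → Walk b c es → Walk a c (e :: es)

/-- `H` is a subgraph of `G`. -/
def IsSubgraphOf (H : FinMGraph) : Prop :=
  ∃ (φ : H.V ↪ G.V) (ψ : H.E ↪ G.E), ∀ e, G.ends (ψ e) = (H.ends e).map φ

/-- The edge-degree of `v`: the number of incident edges, counted with multiplicity. -/
noncomputable def edeg (v : G.V) : ℕ :=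
  Nat.card {e : G.E // v ∈ G.ends e}

/-- The vertex-degree of `v`: the number of distinct neighbours of `v`. -/
noncomputable def vdeg (v : G.V) : ℕ :=
  Nat.card {w : G.V // w ≠ v ∧ ∃ e : G.E, G.ends e = s(v, w)}

/-- `H` is obtained from `G` by contracting one edge `e = {x,y}` whose endpoints both
have vertex-degree two and edge-degree two. -/
def ContractStep (H : FinMGraph) : Prop :=
  ∃ (x y : G.V) (e : G.E), G.ends e = s(x, y) ∧
    G.vdeg x = 2 ∧ G.edeg x = 2 ∧ G.vdeg y = 2 ∧ G.edeg y = 2 ∧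
    ∃ (φ : G.V → H.V) (ψ : {f : G.E // f ≠ e} ≃ H.E),
      Function.Surjective φ ∧
      (∀ v w : G.V, φ v = φ w ↔ (v = w ∨ (v = x ∧ w = y) ∨ (v = y ∧ w = x))) ∧
      ∀ f : {f : G.E // f ≠ e}, H.ends (ψ f) = (G.ends f.1).map φ

/-- `H` is a weak topological minor of `G`: `H` is obtained from a subgraph of `G` by
repeatedly contracting edges whose endpoints have vertex-degree two and edge-degree two. -/
def IsWeakTopMinorOf (H G : FinMGraph) : Prop :=
  ∃ S : FinMGraph, S.IsSubgraphOf G ∧ Relation.ReflTransGen FinMGraph.ContractStep S H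

/-- The induced subgraph `G[S]` is connected. -/
def ConnectedOn (S : Set G.V) : Prop :=
  ∀ a ∈ S, ∀ b ∈ S, Relation.ReflTransGen (G.stepIn S) a b

/-- `G` is connected. -/
def Connected : Prop := G.ConnectedOn Set.univ

/-- `G` is biconnected: nonempty and removing any single vertex leaves it connected. -/
def Biconnected : Prop :=
  Nonempty G.V ∧ ∀ v : G.V, G.ConnectedOn {w | w ≠ v}

/-- The minimum cost over layouts whose first vertex is `u`. -/
noncomputable def etwFrom (u : G.V) : ℕ :=
  sInf {k | ∃ L : Fin (Fintype.card G.V) ≃ G.V, (L.symm u : ℕ) = 0 ∧ ∀ i, G.cost L i ≤ k}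

/-- The sub-multigraph of `G` on the same vertex set whose edges are those in `F`. -/
noncomputable def restrictE (F : Set G.E) : FinMGraph :=
  { V := G.V, E := {e : G.E // e ∈ F}, ends := fun e => G.ends e.1,
    loopless := fun e => G.loopless e.1 }

/-- Two edges lie in a common block: they are equal or some cycle contains both. -/
def SameBlock (e f : G.E) : Prop :=
  e = f ∨ ∃ (k : ℕ) (v : ZMod k → G.V) (g : ZMod k → G.E),
    G.IsCycleOn k v g ∧ e ∈ Set.range g ∧ f ∈ Set.range g

/-- The block of `G` containing the edge `e`. -/
noncomputable def blockOf (e : G.E) : FinMGraph :=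
  G.restrictE {f | G.SameBlock e f}

/-- The number of vertices outside `X` having a neighbour in `X`. -/
noncomputable def ncut (X : Set G.V) : ℕ :=
  Nat.card {v : G.V // v ∉ X ∧ ∃ x ∈ X, ∃ e : G.E, G.ends e = s(v, x)}

/-- Treewidth, via its layout characterization: the minimum over layouts of the
maximum of `|N_G(C_G(S_i, x_i))|`. -/
noncomputable def twl : ℕ :=
  sInf {k | ∃ L : Fin (Fintype.card G.V) ≃ G.V,
    ∀ i, G.ncut (G.comp (G.tail L i) (L i)) ≤ k}

/-- The maximum edge-degree of `G`. -/
noncomputable def maxEdeg : ℕ :=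
  sSup {m | ∃ v : G.V, m = G.edeg v}

end FinMGraph

/-- A tree-layout of `G`: a rooted tree (given by a parent function under which every
node eventually reaches the root) together with an injective mapping `τ` of the vertices
of `G` into the nodes such that the endpoints of every edge are mapped to comparable
(ancestor/descendant) nodes. -/
structure TreeLayout (G : FinMGraph) where
  T : Type
  par : T → T
  root : T
  par_root : par root = root
  reaches_root : ∀ t : T, ∃ n : ℕ, par^[n] t = root
  τ : G.V → T
  inj : Function.Injective τ
  comparable : ∀ (e : G.E) (a b : G.V), G.ends e = s(a, b) →
    (∃ n : ℕ, par^[n] (τ a) = τ b) ∨ (∃ n : ℕ, par^[n] (τ b) = τ a)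

/-- The set `X_T(u)` of vertices of `G` mapped to descendants of the node `u`. -/
def TreeLayout.region {G : FinMGraph} (TL : TreeLayout G) (u : TL.T) : Set G.V :=
  {x | ∃ n : ℕ, TL.par^[n] (TL.τ x) = u}

/-- The theta graph `θ k`: two vertices joined by `k` parallel edges. -/
def theta (k : ℕ) : FinMGraph :=
  { V := Fin 2, E := Fin k, ends := fun _ => s((0 : Fin 2), 1),
    loopless := fun _ => by rw [Sym2.mk_isDiag_iff]; decide }

/-- The cycle on `n ≥ 2` vertices. -/
def cyc (n : ℕ) (h : 2 ≤ n) : FinMGraph :=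
  letI : NeZero n := ⟨by omega⟩
  letI : Fact (1 < n) := ⟨h⟩
  { V := ZMod n, E := ZMod n, ends := fun i => s(i, i + 1),
    loopless := fun i => by
      rw [Sym2.mk_isDiag_iff]
      exact fun hh => one_ne_zero (left_eq_add.mp hh) }

/-- The multigraph `Z_n^3`, obtained from the cycle on `n ≥ 2` vertices by doubling
every edge. -/
def Z3 (n : ℕ) (h : 2 ≤ n) : FinMGraph :=
  letI : NeZero n := ⟨by omega⟩
  letI : Fact (1 < n) := ⟨h⟩
  { V := ZMod n, E := ZMod n × Fin 2, ends := fun p => s(p.1, p.1 + 1),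
    loopless := fun p => by
      rw [Sym2.mk_isDiag_iff]
      exact fun hh => one_ne_zero (left_eq_add.mp hh) }


/-!
Whichever of `u`, `v` comes later in a layout, say at position `i`, lies in the component
`C_G(S_i, x_i)`, while the other one lies outside `S_i` and hence outside that component.
Each of the three paths therefore leaves the component through a boundary edge, and
edge-disjointness makes these three edges distinct, so the cost of position `i` is at least 3.
-/

namespace FinMGraph

variable (G : FinMGraph)

/-- The edge boundary `E_G(X)`, whose cardinality is `G.cut X`. -/
def edgeBoundary (X : Set G.V) : Set G.E :=
  {e | ∃ a b, G.ends e = s(a, b) ∧ a ∈ X ∧ b ∉ X}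

variable {G}

theorem edgeBoundary_compl (X : Set G.V) : G.edgeBoundary Xᶜ = G.edgeBoundary X := by
  ext e
  constructor <;> rintro ⟨a, b, hab, ha, hb⟩
  · exact ⟨b, a, hab.trans Sym2.eq_swap, not_not.mp hb, ha⟩
  · exact ⟨b, a, hab.trans Sym2.eq_swap, hb, not_not.mpr ha⟩

theorem cut_compl (X : Set G.V) : G.cut Xᶜ = G.cut X :=
  congrArg (fun B : Set G.E => Nat.card B) (edgeBoundary_compl X)

theorem le_etw_of_forall_exists_le_cost {k : ℕ}
    (h : ∀ L : Fin (Fintype.card G.V) ≃ G.V, ∃ i, k ≤ G.cost L i) : k ≤ G.etw := by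
  have hcost_le (L : Fin (Fintype.card G.V) ≃ G.V) (i) : G.cost L i ≤ Fintype.card G.E :=
    (Finite.card_subtype_le _).trans Nat.card_eq_fintype_card.le
  refine le_csInf ⟨_, (Fintype.equivFin G.V).symm, hcost_le _⟩ ?_
  rintro m ⟨L, hL⟩
  obtain ⟨i, hi⟩ := h L
  exact hi.trans (hL i)

theorem Walk.exists_mem_edgeBoundary {X : Set G.V} {a b : G.V} {es : List G.E}
    (w : G.Walk a b es) (ha : a ∈ X) (hb : b ∉ X) : ∃ e ∈ es, e ∈ G.edgeBoundary X := by
  induction w with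
  | nil => exact absurd ha hb
  | @cons a c _ e _ he _ ih =>
    by_cases hc : c ∈ X
    · obtain ⟨f, hf, hfX⟩ := ih hc hb
      exact ⟨f, List.mem_cons_of_mem _ hf, hfX⟩
    · exact ⟨e, List.mem_cons_self, a, c, he, ha, hc⟩

/-- Menger's inequality in its easy direction. -/
theorem card_le_cut_of_edge_disjoint_walks {X : Set G.V} {a b : G.V} (ha : a ∈ X) (hb : b ∉ X)
    {k : ℕ} (W : Fin k → List G.E) (hW : ∀ j, G.Walk a b (W j))
    (hdisj : Pairwise fun i j => (W i).Disjoint (W j)) : k ≤ G.cut X := by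
  choose e he hbdry using fun j => (hW j).exists_mem_edgeBoundary ha hb
  have hinj : Function.Injective fun j => (⟨e j, hbdry j⟩ : G.edgeBoundary X) := by
    intro i j hij
    by_contra hne
    have heq : e i = e j := congrArg Subtype.val hij
    exact hdisj hne (he i) (heq ▸ he j)
  calc k = Nat.card (Fin k) := (Nat.card_fin k).symm
    _ ≤ G.cut X := Nat.card_le_card_of_injective _ hinj

theorem mem_comp_self (S : Set G.V) (v : G.V) : v ∈ G.comp S v :=
  Relation.ReflTransGen.refl

theorem comp_subset {S : Set G.V} {v : G.V} (hv : v ∈ S) : G.comp S v ⊆ S := by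
  intro w hw
  induction hw with
  | refl => exact hv
  | tail _ hstep _ => exact hstep.2.1

theorem notMem_comp_tail_of_lt (L : Fin (Fintype.card G.V) ≃ G.V) {i : Fin (Fintype.card G.V)}
    {w : G.V} (hw : L.symm w < i) : w ∉ G.comp (G.tail L i) (L i) := fun hmem =>
  (comp_subset (by simp [tail]) hmem : i ≤ L.symm w).not_gt hw

theorem exists_cost_eq_cut_separating (L : Fin (Fintype.card G.V) ≃ G.V) {u v : G.V}
    (huv : u ≠ v) : ∃ i, ∃ X : Set G.V, G.cost L i = G.cut X ∧ u ∈ X ∧ v ∉ X := by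
  rcases lt_or_gt_of_ne (L.symm.injective.ne huv) with hlt | hlt
  · refine ⟨L.symm v, (G.comp (G.tail L (L.symm v)) (L (L.symm v)))ᶜ, (cut_compl _).symm,
      notMem_comp_tail_of_lt L hlt, ?_⟩
    simpa using G.mem_comp_self _ v
  · refine ⟨L.symm u, G.comp (G.tail L (L.symm u)) (L (L.symm u)), rfl, ?_,
      notMem_comp_tail_of_lt L hlt⟩
    simpa using G.mem_comp_self _ u

end FinMGraph

/-- If a graph `G` contains two vertices `u, v` joined by three pairwise
edge-disjoint paths, then `etw(G) ≥ 3`. -/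
theorem three_le_etw_of_three_edge_disjoint_paths (G : FinMGraph) (u v : G.V) (huv : u ≠ v)
    (es₁ es₂ es₃ : List G.E)
    (h₁ : G.Walk u v es₁) (h₂ : G.Walk u v es₂) (h₃ : G.Walk u v es₃)
    (d₁₂ : ∀ e, e ∈ es₁ → e ∉ es₂)
    (d₁₃ : ∀ e, e ∈ es₁ → e ∉ es₃)
    (d₂₃ : ∀ e, e ∈ es₂ → e ∉ es₃) :
    3 ≤ G.etw := by
  have hW : ∀ j, G.Walk u v (![es₁, es₂, es₃] j) := by
    intro j; fin_cases j <;> assumption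
  have hdisj : Pairwise fun i j => (![es₁, es₂, es₃] i).Disjoint (![es₁, es₂, es₃] j) := by
    intro i j hij e hi hj
    fin_cases i <;> fin_cases j <;> simp_all
  refine G.le_etw_of_forall_exists_le_cost fun L => ?_
  obtain ⟨i, X, hcost, hu, hv⟩ := G.exists_cost_eq_cut_separating L huv
  exact ⟨i, hcost ▸ FinMGraph.card_le_cut_of_edge_disjoint_walks hu hv _ hW hdisj⟩
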